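/- Let P and Q be holomorphic on an open neighborhood of the closed unit disk with Im P(0) = 0 and Im Q(0) = 0, and let w' ∈ 𝕌. Then (1/2π) ∫_𝕌 [ Re P(w) · V_Q(w,w') − Re Q(w) · V_P(w,w') ] dλ(w) = lim_{δ→0⁺} (1/2π) ∫_{w ∈ 𝕌 : |arg(w·conj(w'))| > δ} ( Im P(w)·Re Q(w) − Re P(w)·Im Q(w) ) · Im( (w+w')/(w−w') ) dλ(w). (In the paper's notation: (1/2π)(pV_q − qV_p) is the harmonic conjugate of p̃q − pq̃, where p = Re P, q = Re Q, p̃ = Im P, q̃ = Im Q.) -/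

import Mathlib

noncomputable section

open MeasureTheory Complex Set Real

/-- The unit circle in `ℂ`. -/
def unitCircle : Set ℂ := Metric.sphere 0 1

/-- The kernel `V_P(w,w') = Re(((w+w')/(w'−w))(P(w')−P(w)))`, with the removable singularity on
the diagonal filled by its limit `2 Re(w P′(w))`. -/
def Vfill (P : ℂ → ℂ) (w w' : ℂ) : ℝ :=
  if w = w' then 2 * (w * deriv P w).re
  else (((w + w') / (w' - w)) * (P w' - P w)).re

lemma Vfill_eq_dslope (P : ℂ → ℂ) (z w' : ℂ) :
    Vfill P z w' = ((z + w') * dslope P w' z).re := by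
  rw [Vfill]
  rcases eq_or_ne z w' with h | h
  · subst h
    simp [dslope_same, two_mul, add_mul, Complex.add_re]
  · rw [if_neg h, dslope_of_ne _ h, slope_def_field]
    congr 1
    have h1 : w' - z ≠ 0 := sub_ne_zero.2 (Ne.symm h)
    have h2 : z - w' ≠ 0 := sub_ne_zero.2 h
    field_simp
    ring


lemma pointwise_key (P Q : ℂ → ℂ) (z w' : ℂ) (hz : ‖z‖ = 1)
    (hw : ‖w'‖ = 1) (hne : z ≠ w') :
    ((P z).im * (Q z).re - (P z).re * (Q z).im) * ((z + w') / (z - w')).im =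
      ((P z).re * (((z + w') / (w' - z)) * (Q w' - Q z)).re -
        (Q z).re * (((z + w') / (w' - z)) * (P w' - P z)).re)
      - ((z + w') * ((((Q w').im : ℂ) * P z - ((P w').im : ℂ) * Q z -
            (((Q w').im : ℂ) * P w' - ((P w').im : ℂ) * Q w')) / (z - w'))).im
      + (((Q w').im : ℂ) * P w' - ((P w').im : ℂ) * Q w').re * ((z + w') / (w' - z)).im := by
  have hz0 : z ≠ 0 := by intro h; rw [h] at hz; simp at hz
  have hw0 : w' ≠ 0 := by intro h; rw [h] at hw; simp at hw
  have h1 : w' - z ≠ 0 := sub_ne_zero.2 (Ne.symm hne)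
  have h2 : z - w' ≠ 0 := sub_ne_zero.2 hne
  set u : ℂ := (z + w') / (w' - z) with hu
  have hcz : (starRingEnd ℂ) z = z⁻¹ := by
    rw [eq_inv_of_mul_eq_one_left (a := (starRingEnd ℂ) z)]
    rw [mul_comm, Complex.mul_conj, Complex.normSq_eq_norm_sq, hz]; norm_num
  have hcw : (starRingEnd ℂ) w' = w'⁻¹ := by
    rw [eq_inv_of_mul_eq_one_left (a := (starRingEnd ℂ) w')]
    rw [mul_comm, Complex.mul_conj, Complex.normSq_eq_norm_sq, hw]; norm_num
  have hcu : (starRingEnd ℂ) u = -u := by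
    rw [hu, map_div₀, map_add, map_sub, hcz, hcw]
    field_simp
    ring
  have hre : u.re = 0 := by
    have h3 := Complex.add_conj u
    rw [hcu, add_neg_cancel] at h3
    have := congrArg Complex.re h3
    simp at this
    linarith [this]
  -- rewrite all four complex pieces
  have e1 : (z + w') / (z - w') = -u := by
    rw [hu]; field_simp; try ring
  have e2 : (z + w') * ((((Q w').im : ℂ) * P z - ((P w').im : ℂ) * Q z -
        (((Q w').im : ℂ) * P w' - ((P w').im : ℂ) * Q w')) / (z - w'))
      = u * ((((Q w').im : ℂ) * P w' - ((P w').im : ℂ) * Q w') -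
          (((Q w').im : ℂ) * P z - ((P w').im : ℂ) * Q z)) := by
    rw [hu]; field_simp
    ring
  rw [e1, e2]
  rw [Complex.neg_im, Complex.mul_re, Complex.mul_re, Complex.mul_im, hre]
  simp only [Complex.sub_re, Complex.sub_im, Complex.mul_re, Complex.mul_im,
    Complex.ofReal_re, Complex.ofReal_im]
  ring


lemma exp_per (θ : ℝ) : Complex.exp (((θ + 2*π : ℝ)) * Complex.I) = Complex.exp (θ * Complex.I) := by
  push_cast
  rw [add_mul, Complex.exp_add, Complex.exp_two_pi_mul_I, mul_one]

lemma kappa_zero (w' : ℂ) (hw : ‖w'‖ = 1) (δ : ℝ) :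
    ∫ θ in {θ : ℝ | θ ∈ Set.Ioc 0 (2*π) ∧
        δ < |Complex.arg (Complex.exp (θ * Complex.I) * (starRingEnd ℂ) w')|},
      ((Complex.exp (θ * Complex.I) + w') / (w' - Complex.exp (θ * Complex.I))).im = 0 := by
  have hw0 : w' ≠ 0 := by intro h; rw [h] at hw; simp at hw
  set κ : ℝ → ℝ := fun θ => ((Complex.exp (θ * Complex.I) + w') / (w' - Complex.exp (θ * Complex.I))).im with hκ
  set G : ℝ → ℝ := fun θ =>
    if δ < |Complex.arg (Complex.exp (θ * Complex.I) * (starRingEnd ℂ) w')| then κ θ else 0 with hG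
  have hmcond : MeasurableSet {θ : ℝ | δ < |Complex.arg (Complex.exp (θ * Complex.I) * (starRingEnd ℂ) w')|} := by
    apply measurableSet_lt measurable_const
    exact (Complex.measurable_arg.comp
      ((Complex.continuous_exp.comp (Complex.continuous_ofReal.mul continuous_const)).mul
        continuous_const).measurable).abs
  -- step a
  have hGind : G = Set.indicator {θ : ℝ | δ < |Complex.arg (Complex.exp (θ * Complex.I) * (starRingEnd ℂ) w')|} κ := by
    funext θ
    simp [hG, Set.indicator_apply, Set.mem_setOf_eq]
  have ha : ∫ θ in {θ : ℝ | θ ∈ Set.Ioc 0 (2*π) ∧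
      δ < |Complex.arg (Complex.exp (θ * Complex.I) * (starRingEnd ℂ) w')|}, κ θ
      = ∫ θ in Set.Ioc 0 (2*π), G θ := by
    rw [show {θ : ℝ | θ ∈ Set.Ioc 0 (2*π) ∧
        δ < |Complex.arg (Complex.exp (θ * Complex.I) * (starRingEnd ℂ) w')|}
      = {θ : ℝ | δ < |Complex.arg (Complex.exp (θ * Complex.I) * (starRingEnd ℂ) w')|} ∩
        Set.Ioc 0 (2*π) from by ext θ; simp [and_comm]]
    rw [hGind, MeasureTheory.setIntegral_indicator hmcond, Set.inter_comm]
  -- step b,c,d : move to interval integral and shift by θ' := arg w'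
  have hGper : Function.Periodic G (2*π) := by
    intro θ
    simp only [hG, hκ, exp_per θ]
  have hb : ∫ θ in Set.Ioc 0 (2*π), G θ = ∫ t in (0:ℝ)..(2*π), G (t + Complex.arg w') := by
    rw [intervalIntegral.integral_comp_add_right G (Complex.arg w')]
    rw [← intervalIntegral.integral_of_le (by positivity : (0:ℝ) ≤ 2*π)]
    rw [show (0:ℝ) + Complex.arg w' = Complex.arg w' by ring,
        show 2*π + Complex.arg w' = Complex.arg w' + 2*π by ring]
    have h2 := hGper.intervalIntegral_add_eq 0 (Complex.arg w')
    rw [zero_add] at h2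
    exact h2
  -- step e : shift
  set G0 : ℝ → ℝ := fun t => if δ < |Complex.arg (Complex.exp (t * Complex.I))| then
      ((Complex.exp (t * Complex.I) + 1) / (1 - Complex.exp (t * Complex.I))).im else 0 with hG0
  have hwe : Complex.exp ((Complex.arg w' : ℝ) * Complex.I) = w' := by
    have h := Complex.norm_mul_exp_arg_mul_I w'
    rwa [hw, Complex.ofReal_one, one_mul] at h
  have hshift : ∀ t : ℝ, G (t + Complex.arg w') = G0 t := by
    intro t
    have hexp : Complex.exp (((t + Complex.arg w' : ℝ)) * Complex.I)
        = Complex.exp (t * Complex.I) * w' := by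
      push_cast
      rw [add_mul, Complex.exp_add, hwe]
    have hconj : Complex.exp (t * Complex.I) * w' * (starRingEnd ℂ) w'
        = Complex.exp (t * Complex.I) := by
      rw [mul_assoc, Complex.mul_conj, Complex.normSq_eq_norm_sq, hw]
      norm_num
    have hval : (Complex.exp (t * Complex.I) * w' + w') / (w' - Complex.exp (t * Complex.I) * w')
        = (Complex.exp (t * Complex.I) + 1) / (1 - Complex.exp (t * Complex.I)) := by
      rw [show Complex.exp (t * Complex.I) * w' + w' = (Complex.exp (t * Complex.I) + 1) * w' by ring,
          show w' - Complex.exp (t * Complex.I) * w' = (1 - Complex.exp (t * Complex.I)) * w' by ring,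
          mul_div_mul_right _ _ hw0]
    simp only [hG, hκ, hG0, hexp, hconj, hval]
  have he2 : ∫ t in (0:ℝ)..(2*π), G (t + Complex.arg w') = ∫ t in (0:ℝ)..(2*π), G0 t := by
    simp only [hshift]
  -- step f : reflection
  have hG0odd : ∀ t : ℝ, G0 (2*π - t) = - G0 t := by
    intro t
    have h1 : Complex.exp (((2*π - t : ℝ)) * Complex.I)
        = (starRingEnd ℂ) (Complex.exp (t * Complex.I)) := by
      rw [show (2*π - t : ℝ) = -t + 2*π by ring, exp_per, ← Complex.exp_conj]
      congr 1
      push_cast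
      rw [map_mul, Complex.conj_ofReal, Complex.conj_I]
      ring
    have harg : |Complex.arg ((starRingEnd ℂ) (Complex.exp (t * Complex.I)))|
        = |Complex.arg (Complex.exp (t * Complex.I))| := by
      rw [Complex.arg_conj]
      split_ifs with h
      · rw [h]
      · rw [abs_neg]
    have hv : (((starRingEnd ℂ) (Complex.exp (t * Complex.I)) + 1) /
          (1 - (starRingEnd ℂ) (Complex.exp (t * Complex.I)))).im
        = -((Complex.exp (t * Complex.I) + 1) / (1 - Complex.exp (t * Complex.I))).im := by
      rw [show ((starRingEnd ℂ) (Complex.exp (t * Complex.I)) + 1 : ℂ)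
            = (starRingEnd ℂ) (Complex.exp (t * Complex.I) + 1) by rw [map_add, map_one],
          show (1 - (starRingEnd ℂ) (Complex.exp (t * Complex.I)) : ℂ)
            = (starRingEnd ℂ) (1 - Complex.exp (t * Complex.I)) by rw [map_sub, map_one],
          ← map_div₀, Complex.conj_im]
    simp only [hG0, h1, harg, hv]
    split_ifs <;> simp
  have hf : ∫ t in (0:ℝ)..(2*π), G0 t = 0 := by
    have h1 := intervalIntegral.integral_comp_sub_left (a := 0) (b := 2*π) G0 (2*π)
    rw [sub_self, sub_zero] at h1
    have h2 : ∫ x in (0:ℝ)..(2*π), G0 (2*π - x) = -∫ x in (0:ℝ)..(2*π), G0 x := by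
      simp only [hG0odd]
      exact intervalIntegral.integral_neg
    linarith
  rw [ha, hb, he2, hf]


lemma mean_value {S : ℂ → ℂ} {U : Set ℂ} (hU : IsOpen U)
    (hUc : Metric.closedBall (0 : ℂ) 1 ⊆ U) (hS : DifferentiableOn ℂ S U) :
    ∫ θ in (0:ℝ)..(2*π), S (Complex.exp (θ * Complex.I)) = (2*π : ℝ) * S 0 := by
  have hsub : Metric.ball (0:ℂ) 1 ⊆ U := fun z hz => hUc (Metric.ball_subset_closedBall hz)
  have hd : DiffContOnCl ℂ S (Metric.ball (0:ℂ) 1) := by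
    refine ⟨hS.mono hsub, ?_⟩
    rw [closure_ball (0:ℂ) one_ne_zero]
    exact (hS.continuousOn).mono hUc
  have h0 : (0:ℂ) ∈ Metric.ball (0:ℂ) 1 := by simp
  have hcauchy := hd.circleIntegral_sub_inv_smul h0
  rw [circleIntegral] at hcauchy
  have hint : ∀ θ : ℝ, deriv (circleMap 0 1) θ •
      ((circleMap 0 1 θ - 0)⁻¹ • S (circleMap 0 1 θ))
      = Complex.I * S (Complex.exp (θ * Complex.I)) := by
    intro θ
    have hne : circleMap 0 1 θ ≠ 0 := circleMap_ne_center one_ne_zero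
    rw [deriv_circleMap, smul_eq_mul, smul_eq_mul, sub_zero]
    field_simp [circleMap]
    congr 1
    simp [circleMap, mul_comm]
  simp only [hint] at hcauchy
  rw [intervalIntegral.integral_const_mul] at hcauchy
  have h2 : (2 * (π:ℂ) * Complex.I) • S 0 = Complex.I * (((2*π:ℝ) : ℂ) * S 0) := by
    push_cast
    rw [smul_eq_mul]
    ring
  exact mul_left_cancel₀ Complex.I_ne_zero (hcauchy.trans h2)

lemma mean_value_im {S : ℂ → ℂ} {U : Set ℂ} (hU : IsOpen U)
    (hUc : Metric.closedBall (0 : ℂ) 1 ⊆ U) (hS : DifferentiableOn ℂ S U) :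
    ∫ θ in (0:ℝ)..(2*π), (S (Complex.exp (θ * Complex.I))).im = (2*π : ℝ) * (S 0).im := by
  have hcont : Continuous fun θ : ℝ => S (Complex.exp (θ * Complex.I)) := by
    apply (hS.continuousOn).comp_continuous
      (Complex.continuous_exp.comp (Complex.continuous_ofReal.mul continuous_const))
    intro θ
    apply hUc
    simp [Metric.mem_closedBall, Complex.norm_exp_ofReal_mul_I]
  have hii : IntervalIntegrable (fun θ : ℝ => S (Complex.exp (θ * Complex.I)))
      volume 0 (2*π) := hcont.intervalIntegrable 0 (2*π)
  have h1 : ∫ θ in (0:ℝ)..(2*π), (S (Complex.exp (θ * Complex.I))).im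
      = (∫ θ in (0:ℝ)..(2*π), S (Complex.exp (θ * Complex.I))).im := by
    rw [intervalIntegral.integral_of_le (by positivity : (0:ℝ) ≤ 2*π),
        intervalIntegral.integral_of_le (by positivity : (0:ℝ) ≤ 2*π)]
    have := integral_im (μ := volume.restrict (Set.Ioc (0:ℝ) (2*π)))
      (f := fun θ : ℝ => S (Complex.exp (θ * Complex.I))) ?_
    · simpa using this
    · exact (hii.1).congr_set_ae Filter.EventuallyEq.rfl
  rw [h1, mean_value hU hUc hS]
  simp


lemma measure_small (w' : ℂ) (hw : ‖w'‖ = 1) (δ : ℝ) (hδ0 : 0 ≤ δ) (hδπ : δ ≤ π) :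
    volume {θ : ℝ | θ ∈ Set.Ioc 0 (2*π) ∧
        ¬ δ < |Complex.arg (Complex.exp (θ * Complex.I) * (starRingEnd ℂ) w')|}
      ≤ ENNReal.ofReal (4*δ) := by
  set θ' := Complex.arg w' with hθ'
  have hwe : Complex.exp ((θ' : ℝ) * Complex.I) = w' := by
    have h := Complex.norm_mul_exp_arg_mul_I w'
    rwa [hw, Complex.ofReal_one, one_mul] at h
  have hsub : {θ : ℝ | θ ∈ Set.Ioc 0 (2*π) ∧
        ¬ δ < |Complex.arg (Complex.exp (θ * Complex.I) * (starRingEnd ℂ) w')|}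
      ⊆ Set.Icc (θ' - δ) (θ' + δ) ∪ Set.Icc (θ' + 2*π - δ) (θ' + 2*π + δ) := by
    rintro θ ⟨hθI, hθc⟩
    push_neg at hθc
    set ζ := Complex.exp (θ * Complex.I) * (starRingEnd ℂ) w' with hζ
    set a := Complex.arg ζ with ha
    have hζe : ζ = Complex.exp (((θ - θ' : ℝ)) * Complex.I) := by
      rw [hζ, ← hwe, ← Complex.exp_conj]
      rw [← Complex.exp_add]
      congr 1
      push_cast
      rw [map_mul, Complex.conj_ofReal, Complex.conj_I]
      ring
    have hζ1 : ‖ζ‖ = 1 := by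
      rw [hζe, Complex.norm_exp_ofReal_mul_I]
    have hζea : Complex.exp ((a : ℝ) * Complex.I) = ζ := by
      have h := Complex.norm_mul_exp_arg_mul_I ζ
      rwa [hζ1, Complex.ofReal_one, one_mul] at h
    obtain ⟨n, hn⟩ := Complex.exp_eq_exp_iff_exists_int.1 (hζe.symm.trans hζea.symm)
    have him := congrArg Complex.im hn
    simp only [Complex.add_im, Complex.mul_im, Complex.ofReal_re, Complex.I_im,
      Complex.ofReal_im, Complex.I_re, Complex.mul_re, Complex.intCast_re,
      Complex.intCast_im, Complex.re_ofNat, Complex.im_ofNat] at him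
    -- him : θ - θ' = a + n * 2π   (roughly)
    have hreal : θ - θ' = a + (n : ℝ) * (2*π) := by linarith [him]
    have hθ'mem := Complex.arg_mem_Ioc w'
    have haabs : |a| ≤ δ := hθc
    have ha1 : -δ ≤ a := (abs_le.1 haabs).1
    have ha2 : a ≤ δ := (abs_le.1 haabs).2
    have hπ : 0 < π := Real.pi_pos
    have hn0 : (-1 : ℝ) < (n : ℝ) := by
      rcases hθI with ⟨h1, h2⟩
      rcases hθ'mem with ⟨h3, h4⟩
      nlinarith
    have hn2 : ((n : ℝ)) < 2 := by
      rcases hθI with ⟨h1, h2⟩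
      rcases hθ'mem with ⟨h3, h4⟩
      nlinarith
    have hn01 : n = 0 ∨ n = 1 := by
      have u1 : (-1 : ℤ) < n := by exact_mod_cast hn0
      have u2 : n < 2 := by exact_mod_cast hn2
      omega
    rcases hn01 with h | h
    · left
      rw [h] at hreal
      simp at hreal
      constructor <;> [linarith; linarith]
    · right
      rw [h] at hreal
      simp at hreal
      constructor <;> [linarith; linarith]
  calc volume _ ≤ volume (Set.Icc (θ' - δ) (θ' + δ) ∪ Set.Icc (θ' + 2*π - δ) (θ' + 2*π + δ)) :=
        measure_mono hsub
    _ ≤ volume (Set.Icc (θ' - δ) (θ' + δ)) + volume (Set.Icc (θ' + 2*π - δ) (θ' + 2*π + δ)) :=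
        measure_union_le _ _
    _ ≤ ENNReal.ofReal (4*δ) := by
        rw [Real.volume_Icc, Real.volume_Icc]
        rw [show θ' + δ - (θ' - δ) = 2*δ by ring, show θ' + 2*π + δ - (θ' + 2*π - δ) = 2*δ by ring]
        rw [← ENNReal.ofReal_add (by linarith) (by linarith),
          show (2*δ + 2*δ : ℝ) = 4*δ by ring]


/-- Antisymmetric contraction: `(1/2π) ∫_𝕌 (pV_q − qV_p)(w,w') dλ(w)` equals the principal value
`lim_{δ→0⁺} (1/2π) ∫_{|arg(w conj w')| > δ} (p̃q − pq̃)(w) Im((w+w')/(w−w')) dλ(w)`,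
i.e. `(1/2π)(pV_q − qV_p)` is the harmonic conjugate of `p̃q − pq̃`. -/
theorem statement11 (P Q : ℂ → ℂ) (U : Set ℂ) (hU : IsOpen U)
    (hUc : Metric.closedBall (0 : ℂ) 1 ⊆ U)
    (hP : DifferentiableOn ℂ P U) (hQ : DifferentiableOn ℂ Q U)
    (hP0 : (P 0).im = 0) (hQ0 : (Q 0).im = 0)
    (w' : ℂ) (hw' : w' ∈ unitCircle) :
    Filter.Tendsto (fun δ : ℝ =>
        (1 / (2 * Real.pi)) * ∫ θ in {θ : ℝ | θ ∈ Set.Ioc 0 (2 * Real.pi) ∧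
            δ < |Complex.arg (Complex.exp (θ * Complex.I) * (starRingEnd ℂ) w')|},
          ((P (Complex.exp (θ * Complex.I))).im * (Q (Complex.exp (θ * Complex.I))).re -
              (P (Complex.exp (θ * Complex.I))).re * (Q (Complex.exp (θ * Complex.I))).im) *
            ((Complex.exp (θ * Complex.I) + w') / (Complex.exp (θ * Complex.I) - w')).im)
      (nhdsWithin 0 (Set.Ioi 0))
      (nhds ((1 / (2 * Real.pi)) * ∫ θ in (0 : ℝ)..(2 * Real.pi),
        ((P (Complex.exp (θ * Complex.I))).re * Vfill Q (Complex.exp (θ * Complex.I)) w' -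
          (Q (Complex.exp (θ * Complex.I))).re * Vfill P (Complex.exp (θ * Complex.I)) w'))) := by
  have hπ : (0:ℝ) < π := Real.pi_pos
  have hw1 : ‖w'‖ = 1 := by
    simpa [unitCircle, Complex.dist_eq] using hw'
  have hw0 : w' ≠ 0 := by
    intro h; rw [h] at hw1; simp at hw1
  have hw'U : w' ∈ U := hUc (by simp [Metric.mem_closedBall, Complex.dist_eq, hw1])
  set R : ℂ → ℂ := fun z => ((Q w').im : ℂ) * P z - ((P w').im : ℂ) * Q z with hRdef
  have hR : DifferentiableOn ℂ R U :=
    ((differentiableOn_const _).mul hP).sub ((differentiableOn_const _).mul hQ)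
  set S : ℂ → ℂ := fun z => (z + w') * dslope R w' z with hSdef
  have hdsl : DifferentiableOn ℂ (dslope R w') U :=
    (differentiableOn_dslope (hU.mem_nhds hw'U)).2 hR
  have hS : DifferentiableOn ℂ S U :=
    (differentiableOn_id.add (differentiableOn_const _)).mul hdsl
  have hee : Continuous (fun θ : ℝ => Complex.exp (θ * Complex.I)) :=
    Complex.continuous_exp.comp (Complex.continuous_ofReal.mul continuous_const)
  have habs1 : ∀ θ : ℝ, ‖Complex.exp (θ * Complex.I)‖ = 1 := fun θ => Complex.norm_exp_ofReal_mul_I θ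
  have hmem : ∀ θ : ℝ, Complex.exp (θ * Complex.I) ∈ U := fun θ =>
    hUc (by simp [Metric.mem_closedBall, Complex.dist_eq, habs1 θ])
  -- continuity facts
  have hVQ : Continuous (fun θ : ℝ => Vfill Q (Complex.exp (θ * Complex.I)) w') := by
    have hrw : (fun θ : ℝ => Vfill Q (Complex.exp (θ * Complex.I)) w')
        = fun θ : ℝ => ((Complex.exp (θ * Complex.I) + w') * dslope Q w' (Complex.exp (θ * Complex.I))).re := by
      funext θ; exact Vfill_eq_dslope Q _ w'
    rw [hrw]
    exact Complex.continuous_re.comp ((hee.add continuous_const).mul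
      (((differentiableOn_dslope (hU.mem_nhds hw'U)).2 hQ).continuousOn.comp_continuous hee hmem))
  have hVP : Continuous (fun θ : ℝ => Vfill P (Complex.exp (θ * Complex.I)) w') := by
    have hrw : (fun θ : ℝ => Vfill P (Complex.exp (θ * Complex.I)) w')
        = fun θ : ℝ => ((Complex.exp (θ * Complex.I) + w') * dslope P w' (Complex.exp (θ * Complex.I))).re := by
      funext θ; exact Vfill_eq_dslope P _ w'
    rw [hrw]
    exact Complex.continuous_re.comp ((hee.add continuous_const).mul
      (((differentiableOn_dslope (hU.mem_nhds hw'U)).2 hP).continuousOn.comp_continuous hee hmem))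
  have hPc : Continuous (fun θ : ℝ => P (Complex.exp (θ * Complex.I))) := hP.continuousOn.comp_continuous hee hmem
  have hQc : Continuous (fun θ : ℝ => Q (Complex.exp (θ * Complex.I))) := hQ.continuousOn.comp_continuous hee hmem
  set gfun : ℝ → ℝ := fun θ => (P (Complex.exp (θ * Complex.I))).re * Vfill Q (Complex.exp (θ * Complex.I)) w' - (Q (Complex.exp (θ * Complex.I))).re * Vfill P (Complex.exp (θ * Complex.I)) w' with hgdef
  set hfun : ℝ → ℝ := fun θ => gfun θ - (S (Complex.exp (θ * Complex.I))).im with hhdef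
  have hgc : Continuous gfun :=
    ((Complex.continuous_re.comp hPc).mul hVQ).sub ((Complex.continuous_re.comp hQc).mul hVP)
  have hTc : Continuous (fun θ : ℝ => (S (Complex.exp (θ * Complex.I))).im) :=
    Complex.continuous_im.comp (hS.continuousOn.comp_continuous hee hmem)
  have hhc : Continuous hfun := hgc.sub hTc
  have hhi : IntegrableOn hfun (Set.Ioc 0 (2 * π)) volume := hhc.integrableOn_Ioc
  -- measurability
  have hmcond : ∀ δ : ℝ, MeasurableSet
      {θ : ℝ | δ < |Complex.arg (Complex.exp (θ * Complex.I) * (starRingEnd ℂ) w')|} := by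
    intro δ
    apply measurableSet_lt measurable_const
    exact (Complex.measurable_arg.comp
      ((Complex.continuous_exp.comp (Complex.continuous_ofReal.mul continuous_const)).mul
        continuous_const).measurable).abs
  have hsetrw : ∀ δ : ℝ, {θ : ℝ | θ ∈ Set.Ioc 0 (2 * π) ∧ δ < |Complex.arg (Complex.exp (θ * Complex.I) * (starRingEnd ℂ) w')|}
      = {θ : ℝ | δ < |Complex.arg (Complex.exp (θ * Complex.I) * (starRingEnd ℂ) w')|}
        ∩ Set.Ioc 0 (2 * π) := by
    intro δ; ext θ; simp [and_comm]
  have hmA : ∀ δ : ℝ, MeasurableSet ({θ : ℝ | θ ∈ Set.Ioc 0 (2 * π) ∧ δ < |Complex.arg (Complex.exp (θ * Complex.I) * (starRingEnd ℂ) w')|}) := by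
    intro δ; rw [hsetrw δ]; exact (hmcond δ).inter measurableSet_Ioc
  have hsubA : ∀ δ : ℝ, ({θ : ℝ | θ ∈ Set.Ioc 0 (2 * π) ∧ δ < |Complex.arg (Complex.exp (θ * Complex.I) * (starRingEnd ℂ) w')|}) ⊆ Set.Ioc 0 (2 * π) := by
    intro δ θ hθ; exact hθ.1
  -- on the truncated set, e θ ≠ w'
  have hneq : ∀ δ : ℝ, 0 < δ → ∀ θ ∈ ({θ : ℝ | θ ∈ Set.Ioc 0 (2 * π) ∧ δ < |Complex.arg (Complex.exp (θ * Complex.I) * (starRingEnd ℂ) w')|}), Complex.exp (θ * Complex.I) ≠ w' := by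
    intro δ hδ θ hθ hcontra
    have h1 : Complex.exp (θ * Complex.I) * (starRingEnd ℂ) w' = 1 := by
      rw [hcontra, Complex.mul_conj, Complex.normSq_eq_norm_sq, hw1]
      norm_num
    have h2 := hθ.2
    rw [h1] at h2
    simp [Complex.arg_one] at h2
    linarith
  -- kappa integrability on truncated set
  have hκmeas : Measurable (fun θ : ℝ => ((Complex.exp (θ * Complex.I) + w') / (w' - Complex.exp (θ * Complex.I))).im) := by
    apply Complex.measurable_im.comp
    exact ((hee.measurable.add measurable_const).div (measurable_const.sub hee.measurable))
  have hκint : ∀ δ ∈ Set.Ioo (0:ℝ) π, IntegrableOn (fun θ : ℝ => ((Complex.exp (θ * Complex.I) + w') / (w' - Complex.exp (θ * Complex.I))).im) ({θ : ℝ | θ ∈ Set.Ioc 0 (2 * π) ∧ δ < |Complex.arg (Complex.exp (θ * Complex.I) * (starRingEnd ℂ) w')|}) volume := by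
    intro δ hδ
    have hsq : (0:ℝ) < 2 - 2 * Real.cos δ := by
      have hc1 : Real.cos δ < Real.cos 0 :=
        Real.strictAntiOn_cos ⟨le_refl 0, hπ.le⟩ ⟨hδ.1.le, hδ.2.le⟩ hδ.1
      rw [Real.cos_zero] at hc1
      linarith
    apply Measure.integrableOn_of_bounded (M := 2 / Real.sqrt (2 - 2 * Real.cos δ))
    · exact ((measure_mono (hsubA δ)).trans_lt measure_Ioc_lt_top).ne
    · exact hκmeas.aestronglyMeasurable
    · filter_upwards [ae_restrict_mem (hmA δ)] with θ hθ
      have hζ1 : ‖Complex.exp (θ * Complex.I) * (starRingEnd ℂ) w'‖ = 1 := by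
        rw [norm_mul, habs1 θ, Complex.norm_conj, hw1, one_mul]
      have hζ0 : Complex.exp (θ * Complex.I) * (starRingEnd ℂ) w' ≠ 0 := by
        intro h; rw [h] at hζ1; simp at hζ1
      have hcos : (Complex.exp (θ * Complex.I) * (starRingEnd ℂ) w').re ≤ Real.cos δ := by
        have h1 : Real.cos (Complex.arg (Complex.exp (θ * Complex.I) * (starRingEnd ℂ) w'))
            = (Complex.exp (θ * Complex.I) * (starRingEnd ℂ) w').re := by
          rw [Complex.cos_arg hζ0, hζ1, div_one]
        have h2 : Real.cos |Complex.arg (Complex.exp (θ * Complex.I) * (starRingEnd ℂ) w')| ≤ Real.cos δ :=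
          (Real.strictAntiOn_cos ⟨hδ.1.le, hδ.2.le⟩
            ⟨abs_nonneg _, Complex.abs_arg_le_pi _⟩ hθ.2).le
        rw [Real.cos_abs, h1] at h2
        exact h2
      have habs' : ‖w' - Complex.exp (θ * Complex.I)‖ = ‖1 - Complex.exp (θ * Complex.I) * (starRingEnd ℂ) w'‖ := by
        have h3 : (1 - Complex.exp (θ * Complex.I) * (starRingEnd ℂ) w') * w' = w' - Complex.exp (θ * Complex.I) * ((starRingEnd ℂ) w' * w') := by
          ring
        have h4 : (starRingEnd ℂ) w' * w' = 1 := by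
          rw [mul_comm, Complex.mul_conj, Complex.normSq_eq_norm_sq, hw1]; norm_num
        rw [h4, mul_one] at h3
        rw [← h3, norm_mul, hw1, mul_one]
      have hnormsq : ‖1 - Complex.exp (θ * Complex.I) * (starRingEnd ℂ) w'‖ ^ 2
          = 2 - 2 * (Complex.exp (θ * Complex.I) * (starRingEnd ℂ) w').re := by
        rw [Complex.sq_norm, Complex.normSq_apply]
        have h5 : (Complex.exp (θ * Complex.I) * (starRingEnd ℂ) w').re ^ 2 + (Complex.exp (θ * Complex.I) * (starRingEnd ℂ) w').im ^ 2 = 1 := by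
          have := Complex.normSq_apply (Complex.exp (θ * Complex.I) * (starRingEnd ℂ) w')
          rw [Complex.normSq_eq_norm_sq, hζ1] at this
          nlinarith [this]
        simp only [Complex.sub_re, Complex.sub_im, Complex.one_re, Complex.one_im]
        nlinarith [h5]
      have hden : Real.sqrt (2 - 2 * Real.cos δ) ≤ ‖w' - Complex.exp (θ * Complex.I)‖ := by
        rw [← Real.sqrt_sq (norm_nonneg (w' - Complex.exp (θ * Complex.I)))]
        apply Real.sqrt_le_sqrt
        rw [habs', hnormsq]
        linarith
      have hnum : ‖Complex.exp (θ * Complex.I) + w'‖ ≤ 2 := by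
        calc ‖Complex.exp (θ * Complex.I) + w'‖ ≤ ‖Complex.exp (θ * Complex.I)‖ + ‖w'‖ :=
              norm_add_le _ _
          _ = 2 := by rw [habs1 θ, hw1]; norm_num
      calc ‖((Complex.exp (θ * Complex.I) + w') / (w' - Complex.exp (θ * Complex.I))).im‖ ≤ ‖(Complex.exp (θ * Complex.I) + w') / (w' - Complex.exp (θ * Complex.I))‖ := by rw [Real.norm_eq_abs]; exact Complex.abs_im_le_norm _
        _ = ‖Complex.exp (θ * Complex.I) + w'‖ / ‖w' - Complex.exp (θ * Complex.I)‖ := norm_div _ _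
        _ ≤ 2 / Real.sqrt (2 - 2 * Real.cos δ) :=
            div_le_div₀ (by norm_num) hnum (Real.sqrt_pos.2 hsq) hden
  -- splitting
  have hsplit : ∀ δ ∈ Set.Ioo (0:ℝ) π,
      ∫ θ in {θ : ℝ | θ ∈ Set.Ioc 0 (2 * π) ∧ δ < |Complex.arg (Complex.exp (θ * Complex.I) * (starRingEnd ℂ) w')|}, ((P (Complex.exp (θ * Complex.I))).im * (Q (Complex.exp (θ * Complex.I))).re - (P (Complex.exp (θ * Complex.I))).re * (Q (Complex.exp (θ * Complex.I))).im) * ((Complex.exp (θ * Complex.I) + w') / (Complex.exp (θ * Complex.I) - w')).im = ∫ θ in {θ : ℝ | θ ∈ Set.Ioc 0 (2 * π) ∧ δ < |Complex.arg (Complex.exp (θ * Complex.I) * (starRingEnd ℂ) w')|}, hfun θ := by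
    intro δ hδ
    have hEq : Set.EqOn (fun θ : ℝ => ((P (Complex.exp (θ * Complex.I))).im * (Q (Complex.exp (θ * Complex.I))).re - (P (Complex.exp (θ * Complex.I))).re * (Q (Complex.exp (θ * Complex.I))).im) * ((Complex.exp (θ * Complex.I) + w') / (Complex.exp (θ * Complex.I) - w')).im)
        (fun θ : ℝ => hfun θ + (((Q w').im : ℂ) * P w' - ((P w').im : ℂ) * Q w').re * ((Complex.exp (θ * Complex.I) + w') / (w' - Complex.exp (θ * Complex.I))).im)
        ({θ : ℝ | θ ∈ Set.Ioc 0 (2 * π) ∧ δ < |Complex.arg (Complex.exp (θ * Complex.I) * (starRingEnd ℂ) w')|}) := by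
      intro θ hθ
      have hzw : Complex.exp (θ * Complex.I) ≠ w' := hneq δ hδ.1 θ hθ
      have h1 := pointwise_key P Q (Complex.exp (θ * Complex.I)) w' (habs1 θ) hw1 hzw
      simp only [hhdef, hgdef, hSdef, hRdef]
      simp only [Vfill, if_neg hzw]
      rw [dslope_of_ne _ hzw, slope_def_field]
      rw [h1]
    rw [MeasureTheory.setIntegral_congr_fun (hmA δ) hEq]
    rw [MeasureTheory.integral_add ((hhi.mono_set (hsubA δ)))
      ((hκint δ hδ).const_mul _)]
    rw [MeasureTheory.integral_const_mul, kappa_zero w' hw1 δ]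
    simp
  -- tendsto of the complementary measure
  have hμ0 : Filter.Tendsto (fun δ : ℝ => (volume.restrict (Set.Ioc 0 (2*π))) ({θ : ℝ | ¬ δ < |Complex.arg (Complex.exp (θ * Complex.I) * (starRingEnd ℂ) w')|}))
      (nhdsWithin 0 (Set.Ioi 0)) (nhds 0) := by
    have hub : ∀ δ ∈ Set.Ioo (0:ℝ) π,
        (volume.restrict (Set.Ioc 0 (2*π))) ({θ : ℝ | ¬ δ < |Complex.arg (Complex.exp (θ * Complex.I) * (starRingEnd ℂ) w')|}) ≤ ENNReal.ofReal (4*δ) := by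
      intro δ hδ
      rw [Measure.restrict_apply (by rw [← Set.compl_setOf]; exact (hmcond δ).compl :
        MeasurableSet {θ : ℝ | ¬ δ < |Complex.arg (Complex.exp (θ * Complex.I) * (starRingEnd ℂ) w')|})]
      have hseq : ({θ : ℝ | ¬ δ < |Complex.arg (Complex.exp (θ * Complex.I) * (starRingEnd ℂ) w')|}) ∩ Set.Ioc 0 (2*π)
          = {θ : ℝ | θ ∈ Set.Ioc 0 (2*π) ∧
              ¬ δ < |Complex.arg (Complex.exp (θ * Complex.I) * (starRingEnd ℂ) w')|} := by
        ext θ; simp [and_comm]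
      rw [hseq]
      exact measure_small w' hw1 δ hδ.1.le hδ.2.le
    have hup : Filter.Tendsto (fun δ : ℝ => ENNReal.ofReal (4*δ))
        (nhdsWithin 0 (Set.Ioi 0)) (nhds 0) := by
      have h4 : Filter.Tendsto (fun δ : ℝ => 4*δ) (nhdsWithin 0 (Set.Ioi 0)) (nhds 0) := by
        have hc : Continuous (fun δ : ℝ => 4*δ) := continuous_const.mul continuous_id
        have := (hc.tendsto 0).mono_left (nhdsWithin_le_nhds (s := Set.Ioi (0:ℝ)))
        simpa using this
      have h5 : Filter.Tendsto ENNReal.ofReal (nhds (0:ℝ)) (nhds (ENNReal.ofReal 0)) :=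
        ENNReal.continuous_ofReal.tendsto 0
      have h6 := h5.comp h4
      rw [ENNReal.ofReal_zero] at h6
      exact h6
    apply tendsto_of_tendsto_of_tendsto_of_le_of_le' tendsto_const_nhds hup
    · filter_upwards with δ using zero_le
    · filter_upwards [Ioo_mem_nhdsGT_of_mem (⟨le_refl 0, hπ⟩ : (0:ℝ) ∈ Set.Ico 0 π)] with δ hδ
      exact hub δ hδ
  have hdiff0 : Filter.Tendsto (fun δ : ℝ =>
      ∫ θ in ({θ : ℝ | ¬ δ < |Complex.arg (Complex.exp (θ * Complex.I) * (starRingEnd ℂ) w')|}), hfun θ ∂(volume.restrict (Set.Ioc 0 (2*π))))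
      (nhdsWithin 0 (Set.Ioi 0)) (nhds 0) :=
    hhi.tendsto_setIntegral_nhds_zero hμ0
  have hAeq : ∀ δ : ℝ, ∫ θ in ({θ : ℝ | θ ∈ Set.Ioc 0 (2 * π) ∧ δ < |Complex.arg (Complex.exp (θ * Complex.I) * (starRingEnd ℂ) w')|}), hfun θ
      = (∫ θ in Set.Ioc 0 (2*π), hfun θ)
        - ∫ θ in ({θ : ℝ | ¬ δ < |Complex.arg (Complex.exp (θ * Complex.I) * (starRingEnd ℂ) w')|}), hfun θ ∂(volume.restrict (Set.Ioc 0 (2*π))) := by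
    intro δ
    rw [Measure.restrict_restrict (by rw [← Set.compl_setOf]; exact (hmcond δ).compl :
        MeasurableSet {θ : ℝ | ¬ δ < |Complex.arg (Complex.exp (θ * Complex.I) * (starRingEnd ℂ) w')|})]
    have hseq2 : ({θ : ℝ | ¬ δ < |Complex.arg (Complex.exp (θ * Complex.I) * (starRingEnd ℂ) w')|}) ∩ Set.Ioc 0 (2*π) = Set.Ioc 0 (2*π) \ ({θ : ℝ | θ ∈ Set.Ioc 0 (2 * π) ∧ δ < |Complex.arg (Complex.exp (θ * Complex.I) * (starRingEnd ℂ) w')|}) := by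
      ext θ
      simp only [Set.mem_inter_iff, Set.mem_setOf_eq, Set.mem_diff]
      tauto
    rw [hseq2, MeasureTheory.integral_diff (hmA δ) hhi (hsubA δ)]
    ring
  have hTend : Filter.Tendsto (fun δ : ℝ => ∫ θ in ({θ : ℝ | θ ∈ Set.Ioc 0 (2 * π) ∧ δ < |Complex.arg (Complex.exp (θ * Complex.I) * (starRingEnd ℂ) w')|}), hfun θ)
      (nhdsWithin 0 (Set.Ioi 0)) (nhds (∫ θ in Set.Ioc 0 (2*π), hfun θ)) := by
    simp only [hAeq]
    have := tendsto_const_nhds (x := ∫ θ in Set.Ioc 0 (2*π), hfun θ)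
      (f := nhdsWithin (0:ℝ) (Set.Ioi 0))
    have h2 := this.sub hdiff0
    simpa using h2
  -- value of the limit
  have hS0 : (S 0).im = 0 := by
    have h0w : (0:ℂ) ≠ w' := fun h => hw0 h.symm
    have h1 : S 0 = R w' - R 0 := by
      rw [hSdef]
      simp only
      rw [dslope_of_ne _ h0w, slope_def_field]
      field_simp [hw0]
      ring
    rw [h1, hRdef]
    simp only [Complex.sub_im, Complex.mul_im, Complex.ofReal_re, Complex.ofReal_im]
    rw [hP0, hQ0]
    ring
  have hval : ∫ θ in Set.Ioc 0 (2*π), hfun θ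
      = ∫ θ in (0:ℝ)..(2*π), gfun θ := by
    rw [← intervalIntegral.integral_of_le (by positivity : (0:ℝ) ≤ 2*π)]
    have hgi : IntervalIntegrable gfun volume 0 (2*π) := hgc.intervalIntegrable 0 (2*π)
    have hti : IntervalIntegrable (fun θ : ℝ => (S (Complex.exp (θ * Complex.I))).im) volume 0 (2*π) :=
      hTc.intervalIntegrable 0 (2*π)
    rw [hhdef]
    rw [intervalIntegral.integral_sub hgi hti]
    rw [mean_value_im hU hUc hS, hS0]
    ring
  -- assemble
  have hfinal : Filter.Tendsto (fun δ : ℝ => (1 / (2*π)) * ∫ θ in ({θ : ℝ | θ ∈ Set.Ioc 0 (2 * π) ∧ δ < |Complex.arg (Complex.exp (θ * Complex.I) * (starRingEnd ℂ) w')|}), hfun θ)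
      (nhdsWithin 0 (Set.Ioi 0))
      (nhds ((1 / (2*π)) * ∫ θ in (0:ℝ)..(2*π), gfun θ)) := by
    rw [← hval]
    exact hTend.const_mul _
  apply hfinal.congr'
  filter_upwards [Ioo_mem_nhdsGT_of_mem (⟨le_refl 0, hπ⟩ : (0:ℝ) ∈ Set.Ico 0 π)] with δ hδ
  rw [hsplit δ hδ]
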